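/- Let A → B be an embedding of unital rings such that B is free as a right A-module. If M and N are left A-modules with Ann_A(N) ⊆ Ann_A(M) (i.e. M is weakly contained in N), then Ann_B(B ⊗_A N) ⊆ Ann_B(B ⊗_A M). -/

import Mathlib

/-!
Fix a basis `(e i)` of `B` as a right `A`-module and expand `b * c = ∑ e i * f (a i)`. Each
coordinate functional `B → A` is right `A`-linear, so it induces an additive map
`B ⊗_A N → N`, `c ⊗ n ↦ coord c • n`; applied to `(b * c) ⊗ n = 0` it shows that every `a i`
kills `N`, hence kills `M`. Then `(b * c) ⊗ m = ∑ e i ⊗ a i • m = 0`.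
-/

open TensorProduct

noncomputable section

namespace Paper

universe u

section Induced

variable {A B : Type*} [Ring A] [Ring B] (f : A →+* B)
variable (M : Type*) [AddCommGroup M] [Module A M]

/-- The defining relations of the induced module `B ⊗_A M` along a ring map `f : A → B`,
inside `B ⊗[ℤ] M`. -/
def indRel : Submodule B (B ⊗[ℤ] M) :=
  Submodule.span B
    {x | ∃ (b : B) (a : A) (m : M), x = (b * f a) ⊗ₜ[ℤ] m - b ⊗ₜ[ℤ] (a • m)}

/-- The induced module `B ⊗_A M` along a ring map `f : A → B`, realized as the quotient of
`B ⊗[ℤ] M` by the relations `(b * f a) ⊗ m = b ⊗ (a • m)`.  It carries its canonical left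
`B`-module structure. -/
def Induced := (B ⊗[ℤ] M) ⧸ indRel f M

instance : AddCommGroup (Induced f M) :=
  inferInstanceAs (AddCommGroup ((B ⊗[ℤ] M) ⧸ indRel f M))

instance : Module B (Induced f M) :=
  inferInstanceAs (Module B ((B ⊗[ℤ] M) ⧸ indRel f M))

/-- The canonical map `B × M → B ⊗_A M`. -/
def inducedMk (b : B) (m : M) : Induced f M :=
  Submodule.Quotient.mk (b ⊗ₜ[ℤ] m)

end Induced

end Paper

end

namespace Paper

section Induced

variable {A B : Type*} [Ring A] [Ring B] (f : A →+* B)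
variable {M : Type*} [AddCommGroup M] [Module A M]

def Induced.mkQ : B ⊗[ℤ] M →ₗ[B] Induced f M :=
  (indRel f M).mkQ

theorem Induced.mkQ_tmul (b : B) (m : M) : Induced.mkQ f (b ⊗ₜ m) = inducedMk f M b m :=
  rfl

theorem inducedMk_mul (b : B) (a : A) (m : M) :
    inducedMk f M (b * f a) m = inducedMk f M b (a • m) :=
  (Submodule.Quotient.eq _).mpr (Submodule.subset_span ⟨b, a, m, rfl⟩)

theorem inducedMk_zero_right (b : B) : inducedMk f M b 0 = 0 := by
  rw [← Induced.mkQ_tmul, tmul_zero, map_zero]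

theorem smul_inducedMk (b c : B) (m : M) :
    b • inducedMk f M c m = inducedMk f M (b * c) m := by
  rw [← Induced.mkQ_tmul, ← map_smul, smul_tmul', smul_eq_mul, Induced.mkQ_tmul]

theorem inducedMk_sum_left {ι : Type*} (s : Finset ι) (x : ι → B) (m : M) :
    inducedMk f M (∑ i ∈ s, x i) m = ∑ i ∈ s, inducedMk f M (x i) m := by
  simp only [← Induced.mkQ_tmul, sum_tmul, map_sum]

theorem mem_annihilator_induced_iff (b : B) :
    b ∈ Module.annihilator B (Induced f M) ↔ ∀ c m, inducedMk f M (b * c) m = 0 := by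
  refine ⟨fun hb c m => smul_inducedMk f b c m ▸ Module.mem_annihilator.mp hb _, fun hb => ?_⟩
  rw [Module.mem_annihilator]
  intro x
  obtain ⟨y, rfl⟩ := Submodule.mkQ_surjective (indRel f M) x
  change b • Induced.mkQ f y = 0
  rw [← map_smul]
  induction y using TensorProduct.induction_on with
  | zero => rw [smul_zero, map_zero]
  | tmul c m => rw [smul_tmul', smul_eq_mul]; exact hb c m
  | add y z hy hz => rw [smul_add, map_add, hy, hz, add_zero]

theorem map_eq_zero_of_mem_indRel {P : Type*} [AddCommGroup P] (Φ : B ⊗[ℤ] M →+ P)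
    (hΦ : ∀ (b : B) (a : A) (m : M), Φ ((b * f a) ⊗ₜ m) = Φ (b ⊗ₜ (a • m)))
    {x : B ⊗[ℤ] M} (hx : x ∈ indRel f M) : Φ x = 0 := by
  suffices ∀ c : B, Φ (c • x) = 0 by simpa using this 1
  induction hx using Submodule.span_induction with
  | mem x hx =>
      obtain ⟨b, a, m, rfl⟩ := hx
      intro c
      rw [smul_sub, smul_tmul', smul_tmul', smul_eq_mul, smul_eq_mul, ← mul_assoc, map_sub,
        hΦ, sub_self]
  | zero => simp
  | add x y _ _ hx hy => intro c; rw [smul_add, map_add, hx, hy, add_zero]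
  | smul b x _ hx => intro c; rw [smul_smul]; exact hx (c * b)

theorem smul_eq_zero_of_inducedMk_eq_zero (κ : B →+ A) (hκ : ∀ b a, κ (b * f a) = κ b * a)
    {c : B} {m : M} (h : inducedMk f M c m = 0) : κ c • m = 0 := by
  let Φ : B ⊗[ℤ] M →+ M :=
    liftAddHom ((smulAddHom A M).comp κ) fun r b m => by
      change κ (r • b) • m = κ b • r • m
      rw [map_zsmul, smul_assoc, smul_comm (κ b) r m]
  have hΦ : ∀ b m, Φ (b ⊗ₜ m) = κ b • m := fun _ _ => liftAddHom_tmul _ _ _ _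
  rw [← hΦ]
  refine map_eq_zero_of_mem_indRel f Φ (fun b a m => ?_) ((Submodule.Quotient.mk_eq_zero _).mp h)
  rw [hΦ, hΦ, hκ, mul_smul]

end Induced

section Basis

variable {A B : Type*} [Ring A] [Ring B] (f : A →+* B) [Module Aᵐᵒᵖ B]
variable (hsmul : ∀ (a : A) (b : B), MulOpposite.op a • b = b * f a)
variable {ι : Type*} (e : Module.Basis ι Aᵐᵒᵖ B)
variable {M N : Type*} [AddCommGroup M] [Module A M] [AddCommGroup N] [Module A N]

include hsmul e

theorem inducedMk_eq_sum_basis (c : B) (m : M) :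
    inducedMk f M c m = (e.repr c).sum fun i a => inducedMk f M (e i) (a.unop • m) := by
  conv_lhs => rw [← e.linearCombination_repr c, Finsupp.linearCombination_apply]
  rw [Finsupp.sum, inducedMk_sum_left]
  refine Finset.sum_congr rfl fun i _ => ?_
  rw [← MulOpposite.op_unop (e.repr c i), hsmul, inducedMk_mul, MulOpposite.op_unop]

theorem unop_repr_mem_annihilator_of_mem_annihilator_induced {b : B}
    (hb : b ∈ Module.annihilator B (Induced f N)) (i : ι) :
    (e.repr b i).unop ∈ Module.annihilator A N := by
  let κ : B →+ A := MulOpposite.opAddEquiv.symm.toAddMonoidHom.comp (e.coord i).toAddMonoidHom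
  have hκ : ∀ b a, κ (b * f a) = κ b * a := fun b a => by
    simp [κ, ← hsmul, MulOpposite.unop_mul]
  refine Module.mem_annihilator.mpr fun n => smul_eq_zero_of_inducedMk_eq_zero f κ hκ ?_
  simpa using ((mem_annihilator_induced_iff f b).mp hb 1 n)

theorem annihilator_induced_le_of_basis
    (h : Module.annihilator A N ≤ Module.annihilator A M) :
    Module.annihilator B (Induced f N) ≤ Module.annihilator B (Induced f M) := by
  intro b hb
  rw [mem_annihilator_induced_iff]
  intro c m
  rw [inducedMk_eq_sum_basis f hsmul e]
  refine Finset.sum_eq_zero fun i _ => ?_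
  have hcoord := h <| unop_repr_mem_annihilator_of_mem_annihilator_induced f hsmul e
    (Ideal.mul_mem_right c _ hb) i
  simp only [Module.mem_annihilator.mp hcoord, inducedMk_zero_right]

end Basis

end Paper

open Paper in
theorem induced_annihilator_le_of_annihilator_le_general
    (A B : Type*) [Ring A] [Ring B] (f : A →+* B)
    (hfree : letI : Module Aᵐᵒᵖ B := Module.compHom B (RingHom.op f);
      Module.Free Aᵐᵒᵖ B)
    (M N : Type*) [AddCommGroup M] [Module A M] [AddCommGroup N] [Module A N]
    (h : Module.annihilator A N ≤ Module.annihilator A M) :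
    Module.annihilator B (Induced f N) ≤ Module.annihilator B (Induced f M) := by
  let _ : Module Aᵐᵒᵖ B := Module.compHom B (RingHom.op f)
  exact annihilator_induced_le_of_basis f (fun _ _ => rfl) (Module.Free.chooseBasis Aᵐᵒᵖ B) h

open Paper in
/-- weak containment is preserved by scalar extension along a ring embedding
`A → B` making `B` free as a right `A`-module. -/
theorem induced_annihilator_le_of_annihilator_le
    (A B : Type*) [Ring A] [Ring B] (f : A →+* B) (hf : Function.Injective f)
    (hfree : letI : Module Aᵐᵒᵖ B := Module.compHom B (RingHom.op f);
      Module.Free Aᵐᵒᵖ B)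
    (M N : Type*) [AddCommGroup M] [Module A M] [AddCommGroup N] [Module A N]
    (h : Module.annihilator A N ≤ Module.annihilator A M) :
    Module.annihilator B (Induced f N) ≤ Module.annihilator B (Induced f M) :=
  induced_annihilator_le_of_annihilator_le_general A B f hfree M N h
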